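/- arXiv:2512.16269 — 2 statements merged into one kernel-verified Lean document; each statement's English description precedes it below -/
import Mathlib

section
/- Let E and W be real Banach spaces, let s ⊆ E be a convex set, let f : E → W, and let f' : E → (E →L W) be such that f has Fréchet derivative f'(y) at every y ∈ s, with f' Lipschitz on s with constant L ≥ 0. Let z, x ∈ s with f(z) = 0, and let A : E ≃L W be a continuous linear isomorphism with A = f'(x) and ‖A⁻¹‖ ≤ M. Then the Newton iterate x⁺ := x − A⁻¹(f(x)) satisfies ‖x⁺ − z‖ ≤ (3·M·L/2) · ‖x − z‖². -/
/-- One-step quadratic error estimate for Newton's method: if `f(z) = 0`,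
`f` has Lipschitz Fréchet derivative on a convex set `s` (constant `L`),
`A = f'(x)` is a continuous linear isomorphism with `‖A⁻¹‖ ≤ M`, then the
Newton iterate `x⁺ = x − A⁻¹(f x)` satisfies
`‖x⁺ − z‖ ≤ (3ML/2)‖x − z‖²`. -/
theorem newton_one_step_quadratic
    {E W : Type*} [NormedAddCommGroup E] [NormedSpace ℝ E] [CompleteSpace E]
    [NormedAddCommGroup W] [NormedSpace ℝ W] [CompleteSpace W]
    (s : Set E) (hs : Convex ℝ s)
    (f : E → W) (f' : E → E →L[ℝ] W)
    (hf : ∀ y ∈ s, HasFDerivAt f (f' y) y)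
    (L : ℝ) (hL : 0 ≤ L)
    (hLip : ∀ y₁ ∈ s, ∀ y₂ ∈ s, ‖f' y₁ - f' y₂‖ ≤ L * ‖y₁ - y₂‖)
    (z x : E) (hz : z ∈ s) (hx : x ∈ s) (hfz : f z = 0)
    (A : E ≃L[ℝ] W) (hA : (A : E →L[ℝ] W) = f' x)
    (M : ℝ) (hM : ‖(A.symm : W →L[ℝ] E)‖ ≤ M) :
    ‖(x - A.symm (f x)) - z‖ ≤ 3 * M * L / 2 * ‖x - z‖ ^ 2 := by
  have hseg : segment ℝ z x ⊆ s := hs.segment_subset hz hx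
  set g : E → W := fun y => f y - f' x y with hg
  -- derivative of g on the segment
  have hgderiv : ∀ y ∈ segment ℝ z x,
      HasFDerivWithinAt g (f' y - f' x) (segment ℝ z x) y := fun y hy =>
    (((hf y (hseg hy)).sub ((f' x).hasFDerivAt)).hasFDerivWithinAt)
  have hbound : ∀ y ∈ segment ℝ z x, ‖f' y - f' x‖ ≤ L * ‖x - z‖ := by
    intro y hy
    refine (hLip y (hseg hy) x hx).trans ?_
    gcongr
    have := dist_add_dist_of_mem_segment hy
    have h1 : dist y x ≤ dist z x := by
      nlinarith [dist_nonneg (x := z) (y := y)]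
    simpa [dist_eq_norm, norm_sub_rev] using h1
  have key : ‖g x - g z‖ ≤ L * ‖x - z‖ * ‖x - z‖ := by
    have := (convex_segment z x).norm_image_sub_le_of_norm_hasFDerivWithin_le
      hgderiv hbound (left_mem_segment ℝ z x) (right_mem_segment ℝ z x)
    simpa [norm_sub_rev] using this
  have hgx : g x - g z = f x - f' x (x - z) := by
    simp only [hg, hfz, map_sub]
    abel
  have hMnn : 0 ≤ M := le_trans (norm_nonneg _) hM
  have main : ‖(x - A.symm (f x)) - z‖ ≤ M * (L * ‖x - z‖ * ‖x - z‖) := by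
    have heq : (x - A.symm (f x)) - z = A.symm (A (x - z) - f x) := by
      simp [map_sub, ContinuousLinearEquiv.symm_apply_apply]
      abel
    rw [heq]
    calc ‖A.symm (A (x - z) - f x)‖
        ≤ ‖(A.symm : W →L[ℝ] E)‖ * ‖A (x - z) - f x‖ :=
          (A.symm : W →L[ℝ] E).le_opNorm _
      _ ≤ M * (L * ‖x - z‖ * ‖x - z‖) := by
          apply mul_le_mul hM ?_ (norm_nonneg _) hMnn
          have : A (x - z) = f' x (x - z) := by
            rw [← hA]; rfl
          rw [this, ← norm_neg, neg_sub, ← hgx]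
          exact key
  calc ‖(x - A.symm (f x)) - z‖ ≤ M * (L * ‖x - z‖ * ‖x - z‖) := main
    _ ≤ 3 * M * L / 2 * ‖x - z‖ ^ 2 := by
        rw [sq]; nlinarith [mul_nonneg hMnn hL, sq_nonneg (‖x - z‖), mul_nonneg (mul_nonneg hMnn hL) (mul_nonneg (norm_nonneg (x-z)) (norm_nonneg (x-z)))]
end

section
/- Let E and W be real Banach spaces, let z ∈ E, r > 0, M ≥ 0, L ≥ 0, and let B = closedBall(z, r). Let f : E → W with f(z) = 0, let f' : E → (E →L W) be such that f has Fréchet derivative f'(y) at every y ∈ B and f' is Lipschitz on B with constant L, and suppose for every x ∈ B there is a continuous linear isomorphism A(x) : E ≃L W with A(x) = f'(x) and ‖A(x)⁻¹‖ ≤ M. Assume (3·M·L/2)·r < 1. Then for any sequence (u_n) with u_0 ∈ B and u_{n+1} = u_n − A(u_n)⁻¹(f(u_n)) for all n, the whole sequence remains in B and u_n → z as n → ∞. -/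
/-- Local (quadratic) convergence of Newton's method: if `f(z) = 0`, `f` has
Lipschitz Fréchet derivative (constant `L`) on the closed ball `B = B̄(z, r)`,
at every `x ∈ B` the derivative is invertible with `‖A(x)⁻¹‖ ≤ M`, and
`(3ML/2)·r < 1`, then any Newton sequence started in `B` stays in `B` and
converges to `z`. -/
theorem newton_local_convergence
    {E W : Type*} [NormedAddCommGroup E] [NormedSpace ℝ E] [CompleteSpace E]
    [NormedAddCommGroup W] [NormedSpace ℝ W] [CompleteSpace W]
    (z : E) (r : ℝ) (hr : 0 < r) (M : ℝ) (hM : 0 ≤ M) (L : ℝ) (hL : 0 ≤ L)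
    (f : E → W) (hfz : f z = 0)
    (f' : E → E →L[ℝ] W)
    (hf : ∀ y ∈ Metric.closedBall z r, HasFDerivAt f (f' y) y)
    (hLip : ∀ y₁ ∈ Metric.closedBall z r, ∀ y₂ ∈ Metric.closedBall z r,
      ‖f' y₁ - f' y₂‖ ≤ L * ‖y₁ - y₂‖)
    (A : E → (E ≃L[ℝ] W))
    (hA : ∀ x ∈ Metric.closedBall z r, (A x : E →L[ℝ] W) = f' x)
    (hAinv : ∀ x ∈ Metric.closedBall z r, ‖((A x).symm : W →L[ℝ] E)‖ ≤ M)
    (hcontract : 3 * M * L / 2 * r < 1)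
    (u : ℕ → E) (hu0 : u 0 ∈ Metric.closedBall z r)
    (hstep : ∀ n, u (n + 1) = u n - (A (u n)).symm (f (u n))) :
    (∀ n, u n ∈ Metric.closedBall z r) ∧
      Filter.Tendsto u Filter.atTop (nhds z) := by

  have hzB : z ∈ Metric.closedBall z r := Metric.mem_closedBall_self hr.le
  have key : ∀ x ∈ Metric.closedBall z r,
      ‖(x - (A x).symm (f x)) - z‖ ≤ M * L * ‖x - z‖ ^ 2 := by
    intro x hx
    have hseg : segment ℝ x z ⊆ Metric.closedBall z r :=
      (convex_closedBall z r).segment_subset hx hzB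
    have hder : ∀ w ∈ segment ℝ x z, HasFDerivWithinAt f (f' w) (segment ℝ x z) w :=
      fun w hw => (hf w (hseg hw)).hasFDerivWithinAt
    have hbound : ∀ w ∈ segment ℝ x z, ‖f' w - f' x‖ ≤ L * ‖z - x‖ := by
      intro w hw
      have h1 : ‖f' w - f' x‖ ≤ L * ‖w - x‖ := hLip w (hseg hw) x hx
      refine h1.trans ?_
      obtain ⟨a, b, ha, hb, hab, rfl⟩ := hw
      have hwx : a • x + b • z - x = b • (z - x) := by
        have hab' : a = 1 - b := by linarith
        subst hab'
        module
      rw [hwx, norm_smul, Real.norm_eq_abs, abs_of_nonneg hb]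
      have hb1 : b ≤ 1 := by linarith
      exact mul_le_mul_of_nonneg_left (mul_le_of_le_one_left (norm_nonneg _) hb1) hL
    have taylor := (convex_segment x z).norm_image_sub_le_of_norm_hasFDerivWithin_le'
      hder hbound (left_mem_segment ℝ x z) (right_mem_segment ℝ x z)
    have heq : x - (A x).symm (f x) - z = (A x).symm (f z - f x - f' x (z - x)) := by
      have h1 : (A x).symm (f' x (x - z)) = x - z := by
        rw [← hA x hx]; exact (A x).symm_apply_apply _
      have h2 : f z - f x - f' x (z - x) = f' x (x - z) - f x := by
        rw [hfz, map_sub, map_sub]; abel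
      rw [h2, map_sub, h1]
      abel
    rw [heq]
    have hnorm : ‖(A x).symm (f z - f x - f' x (z - x))‖ ≤
        ‖((A x).symm : W →L[ℝ] E)‖ * ‖f z - f x - f' x (z - x)‖ :=
      ((A x).symm : W →L[ℝ] E).le_opNorm _
    have hzx : ‖z - x‖ = ‖x - z‖ := norm_sub_rev _ _
    calc ‖(A x).symm (f z - f x - f' x (z - x))‖
        ≤ ‖((A x).symm : W →L[ℝ] E)‖ * ‖f z - f x - f' x (z - x)‖ := hnorm
      _ ≤ M * (L * ‖z - x‖ * ‖z - x‖) := by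
          apply mul_le_mul (hAinv x hx) taylor (norm_nonneg _) hM
      _ = M * L * ‖x - z‖ ^ 2 := by rw [hzx]; ring
  set k := M * L * r with hk
  have hk0 : 0 ≤ k := by positivity
  have hk1 : k < 1 := by nlinarith
  have main : ∀ n, u n ∈ Metric.closedBall z r ∧ ‖u n - z‖ ≤ k ^ n * r := by
    intro n
    induction n with
    | zero =>
        refine ⟨hu0, ?_⟩
        have := Metric.mem_closedBall.mp hu0
        rw [dist_eq_norm] at this
        simpa using this
    | succ n ih =>
        obtain ⟨hmem, hbnd⟩ := ih
        have hx : ‖u n - z‖ ≤ r := by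
          have := Metric.mem_closedBall.mp hmem
          rwa [dist_eq_norm] at this
        have h1 : ‖u (n + 1) - z‖ ≤ M * L * ‖u n - z‖ ^ 2 := by
          rw [hstep n]; exact key _ hmem
        have hkn : (0:ℝ) ≤ k ^ n := pow_nonneg hk0 n
        have h2 : M * L * ‖u n - z‖ ^ 2 ≤ k ^ (n + 1) * r := by
          have hML : 0 ≤ M * L := mul_nonneg hM hL
          have hn0 : 0 ≤ ‖u n - z‖ := norm_nonneg _
          have hxx : ‖u n - z‖ ^ 2 ≤ k ^ n * r * r := by nlinarith
          calc M * L * ‖u n - z‖ ^ 2 ≤ M * L * (k ^ n * r * r) := by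
                nlinarith [mul_le_mul_of_nonneg_left hxx hML]
            _ = k ^ (n + 1) * r := by rw [hk]; ring
        have h3 : ‖u (n + 1) - z‖ ≤ k ^ (n + 1) * r := h1.trans h2
        refine ⟨?_, h3⟩
        rw [Metric.mem_closedBall, dist_eq_norm]
        have : k ^ (n + 1) * r ≤ 1 * r :=
          mul_le_mul_of_nonneg_right (pow_le_one₀ hk0 hk1.le) hr.le
        linarith
  refine ⟨fun n => (main n).1, ?_⟩
  have htend : Filter.Tendsto (fun n => k ^ n * r) Filter.atTop (nhds 0) := by
    simpa using (tendsto_pow_atTop_nhds_zero_of_lt_one hk0 hk1).mul_const r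
  have hsq : Filter.Tendsto (fun n => ‖u n - z‖) Filter.atTop (nhds 0) :=
    squeeze_zero (fun n => norm_nonneg _) (fun n => (main n).2) htend
  rw [tendsto_iff_norm_sub_tendsto_zero]
  exact hsq
end
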